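/- arXiv:2209.04797 — 2 statements merged into one kernel-verified Lean document; each statement's English description precedes it below -/
import Mathlib

section
/- Let F be a field, M an s×s matrix over F, and b, c vectors in F^s. If cᵀ * M^k * b = 0 for all k with 0 ≤ k ≤ s - 1, then cᵀ * M^k * b = 0 for all natural numbers k. -/
/-!
By Cayley–Hamilton, `M ^ k = aeval M (X ^ k %ₘ M.charpoly)`, and the remainder has degree
below `s`, so every power of `M` is a linear combination of `M ^ 0, …, M ^ (s - 1)`.
The scalar `cᵀ * M ^ k * b` is linear in `M ^ k`, hence vanishes once it vanishes on those powers.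
-/

open Polynomial Finset

namespace Matrix

variable {R n : Type*} [CommRing R] [Fintype n] [DecidableEq n]

theorem pow_eq_sum_coeff_mod_charpoly (M : Matrix n n R) (k : ℕ) :
    M ^ k = ∑ i ∈ range (Fintype.card n), (X ^ k %ₘ M.charpoly).coeff i • M ^ i := by
  rcases isEmpty_or_nonempty n with _ | _
  · exact Subsingleton.elim _ _
  nontriviality R
  have hdeg : (X ^ k %ₘ M.charpoly).natDegree < Fintype.card n := by
    rw [← M.charpoly_natDegree_eq_dim]
    refine natDegree_modByMonic_lt _ M.charpoly_monic fun h => Fintype.card_ne_zero (α := n) ?_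
    rw [← M.charpoly_natDegree_eq_dim, h, natDegree_one]
  rw [pow_eq_aeval_mod_charpoly, aeval_eq_sum_range' hdeg]

theorem dotProduct_pow_mulVec_eq_zero_of_forall_lt_card (M : Matrix n n R) (b c : n → R)
    (h : ∀ i < Fintype.card n, c ⬝ᵥ (M ^ i *ᵥ b) = 0) (k : ℕ) :
    c ⬝ᵥ (M ^ k *ᵥ b) = 0 := by
  rw [pow_eq_sum_coeff_mod_charpoly, sum_mulVec, dotProduct_sum]
  refine sum_eq_zero fun i hi => ?_
  rw [smul_mulVec, dotProduct_smul, h i (mem_range.mp hi), smul_zero]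

end Matrix

theorem schutzenberger_truncation {F : Type*} [Field F] {s : ℕ}
    (M : Matrix (Fin s) (Fin s) F) (b c : Fin s → F)
    (h : ∀ k : ℕ, k ≤ s - 1 → dotProduct c ((M ^ k).mulVec b) = 0) :
    ∀ k : ℕ, dotProduct c ((M ^ k).mulVec b) = 0 :=
  M.dotProduct_pow_mulVec_eq_zero_of_forall_lt_card b c fun i hi =>
    h i (by rw [Fintype.card_fin] at hi; omega)
end

section
/- Let R be a ring, L an invertible n×n matrix over R whose inverse has (i,j) entry g = (L⁻¹) i j, and suppose g is invertible in R. Then the (n+1)×(n+1) bordered matrix P = [[L, e_j],[-e_iᵀ, 0]] is invertible over R; conversely, if g is not invertible then P is not invertible, assuming R is such that a 1×1 matrix is invertible iff its entry is a unit (e.g., R any ring). -/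
/-!
Factor `P = [[1, 0], [C L⁻¹, 1]] * [[L, 0], [0, S]] * [[1, L⁻¹ B], [0, 1]]` with the Schur
complement `S = 0 - C L⁻¹ B`. The outer factors are unitriangular, hence units, so `P` is a unit
iff the block-diagonal middle factor is, i.e. iff `S` is. For the border `B = e_j`, `C = -e_iᵀ`,
the `1 × 1` matrix `S` has entry `(L⁻¹) i j`.
-/

open Matrix

namespace Matrix

variable {m n α : Type*} [Fintype m] [Fintype n] [DecidableEq m] [DecidableEq n] [Ring α]

/- Mathlib proves `fromBlocks_eq_of_invertible₁₁` and `isUnit_fromBlocks_iff_of_invertible₁₁`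
over commutative rings only; the primed versions below hold over any ring. -/
theorem fromBlocks_eq_of_invertible₁₁' (A : Matrix m m α) (B : Matrix m n α) (C : Matrix n m α)
    (D : Matrix n n α) [Invertible A] :
    fromBlocks A B C D =
      fromBlocks 1 0 (C * ⅟A) 1 * fromBlocks A 0 0 (D - C * ⅟A * B) *
        fromBlocks 1 (⅟A * B) 0 1 := by
  simp only [fromBlocks_multiply, Matrix.mul_zero, Matrix.zero_mul, add_zero, zero_add,
    Matrix.one_mul, Matrix.mul_one, invOf_mul_self, Matrix.mul_invOf_cancel_left,
    Matrix.mul_assoc, add_sub_cancel]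

theorem isUnit_fromBlocks_one_zero₁₂ (C : Matrix n m α) :
    IsUnit (fromBlocks 1 0 C 1 : Matrix (m ⊕ n) (m ⊕ n) α) :=
  isUnit_iff_exists.mpr
    ⟨fromBlocks 1 0 (-C) 1, by simp [fromBlocks_multiply], by simp [fromBlocks_multiply]⟩

theorem isUnit_fromBlocks_one_zero₂₁ (B : Matrix m n α) :
    IsUnit (fromBlocks 1 B 0 1 : Matrix (m ⊕ n) (m ⊕ n) α) :=
  isUnit_iff_exists.mpr
    ⟨fromBlocks 1 (-B) 0 1, by simp [fromBlocks_multiply], by simp [fromBlocks_multiply]⟩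

theorem isUnit_fromBlocks_zero_zero_iff {A : Matrix m m α} {D : Matrix n n α} :
    IsUnit (fromBlocks A 0 0 D) ↔ IsUnit A ∧ IsUnit D := by
  constructor
  · rintro ⟨u, hu⟩
    have hr := u.mul_inv
    have hl := u.inv_mul
    rw [hu, ← fromBlocks_toBlocks (↑u⁻¹ : Matrix (m ⊕ n) (m ⊕ n) α), fromBlocks_multiply,
      ← fromBlocks_one, fromBlocks_inj] at hr hl
    simp only [Matrix.zero_mul, Matrix.mul_zero, add_zero, zero_add] at hr hl
    exact ⟨isUnit_iff_exists.mpr ⟨_, hr.1, hl.1⟩, isUnit_iff_exists.mpr ⟨_, hr.2.2.2, hl.2.2.2⟩⟩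
  · rintro ⟨⟨a, rfl⟩, ⟨d, rfl⟩⟩
    exact isUnit_iff_exists.mpr
      ⟨fromBlocks ↑a⁻¹ 0 0 ↑d⁻¹, by simp [fromBlocks_multiply], by simp [fromBlocks_multiply]⟩

theorem isUnit_fromBlocks_iff_of_invertible₁₁' {A : Matrix m m α} {B : Matrix m n α}
    {C : Matrix n m α} {D : Matrix n n α} [Invertible A] :
    IsUnit (fromBlocks A B C D) ↔ IsUnit (D - C * ⅟A * B) := by
  rw [fromBlocks_eq_of_invertible₁₁', (isUnit_fromBlocks_one_zero₂₁ _).mul_right_iff,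
    (isUnit_fromBlocks_one_zero₁₂ _).mul_left_iff, isUnit_fromBlocks_zero_zero_iff,
    and_iff_right (isUnit_of_invertible A)]

theorem isUnit_iff_isUnit_apply_zero_zero (M : Matrix (Fin 1) (Fin 1) α) :
    IsUnit M ↔ IsUnit (M 0 0) :=
  (MulEquiv.isUnit_map (uniqueRingEquiv (m := Fin 1))).symm

end Matrix

theorem bordered_pencil_isUnit_iff {R : Type*} [Ring R] {n : ℕ}
    (L : Matrix (Fin n) (Fin n) R) [Invertible L] (i j : Fin n) :
    IsUnit (Matrix.fromBlocks L
        (fun k (_ : Fin 1) => if k = j then (1 : R) else 0)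
        (fun (_ : Fin 1) k => if k = i then (-1 : R) else 0)
        (0 : Matrix (Fin 1) (Fin 1) R)) ↔
      IsUnit ((⅟L) i j) := by
  have schur : (0 - of (fun (_ : Fin 1) k => if k = i then (-1 : R) else 0) * ⅟L *
      of (fun k (_ : Fin 1) => if k = j then (1 : R) else 0) : Matrix (Fin 1) (Fin 1) R) 0 0 =
      (⅟L) i j := by
    simp [mul_apply]
  rw [← schur, ← isUnit_iff_isUnit_apply_zero_zero]
  exact isUnit_fromBlocks_iff_of_invertible₁₁'
end
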